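/- For all nonnegative integers n, r, and s, the generalized moment μ_{n,r,s} equals the weight sum Σ_{p ∈ gMot((-r,r)→(2n-s,s))} wt_M(p) over all gentle Motzkin paths from (-r,r) to (2n-s,s). -/

import Mathlib

/-!
Write `φ_k`, `σ_k` for `Φ_k`, `Φ_k^*` viewed as Laurent polynomials; then `Φ̄_k(1/z) = z^{-k} σ_k`
and the numerator of `μ_{n,r,s}` is `L(z^{-n-r} φ_s σ_r)`. Attach to a lattice point of height `b`
the moment `L(z^t φ_s σ_b)` (even points) or `L(z^t φ_s φ_b)` (odd points). Szegő's recurrence in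
the two forms `σ_b = σ_{b+1} + α_b z φ_b` and `φ_{b+1} = (1 - |α_b|²) z φ_b - ᾱ_b σ_{b+1}` says
that these moments satisfy the first-step recurrence of gentle Motzkin paths, with exactly the
weights `wt_M`. On the final column `x = 2n - s` orthogonality (`L(z^t φ_k) = 0` for
`-k < t ≤ 0`, `L(z^t σ_k) = 0` for `-k ≤ t < 0`) leaves `⟨Φ_s, Φ_s⟩` at the endpoint and `0`
elsewhere: the boundary values of `⟨Φ_s, Φ_s⟩` times the path sums. So the two functions agree.
-/

open Polynomial LaurentPolynomial Finset

noncomputable section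

/-- Extension of the Verblunsky coefficients to integer indices, with the
convention `α₋₁ = -1` (and junk value `-1` for all negative indices). -/
def az (α : ℕ → ℂ) (k : ℤ) : ℂ := if 0 ≤ k then α k.toNat else -1

/-- The monic OPUC `Φ_n` defined by Szegő's recurrence
`Φ_{n+1}(z) = z·Φ_n(z) - conj(α_n)·Φ_n^*(z)`, where `Φ_n^*` is the reverse
polynomial `reflect n (map conj Φ_n)`. -/
def szego (α : ℕ → ℂ) : ℕ → Polynomial ℂ
  | 0 => 1
  | n + 1 =>
      Polynomial.X * szego α n -
        Polynomial.C ((starRingEnd ℂ) (α n)) *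
          Polynomial.reflect n ((szego α n).map (starRingEnd ℂ))

/-- `f̄(1/z)` as a Laurent polynomial, for a polynomial `f`. -/
def polyBarInv (f : Polynomial ℂ) : LaurentPolynomial ℂ :=
  f.sum fun k c => LaurentPolynomial.C ((starRingEnd ℂ) c) * LaurentPolynomial.T (-(k : ℤ))

/-- `f̄(1/z)` as a Laurent polynomial, for a Laurent polynomial `f`. -/
def laurentBarInv (f : LaurentPolynomial ℂ) : LaurentPolynomial ℂ :=
  Finsupp.sum f.coeff fun k c => LaurentPolynomial.C ((starRingEnd ℂ) c) * LaurentPolynomial.T (-k)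

/-- The generalized moment `μ_{n,r,s} = ⟨Φ_s(z), z^n·Φ_r(z)⟩ / ⟨Φ_s(z), Φ_s(z)⟩`,
where `⟨f,g⟩ = L(f(z)·ḡ(1/z))` and `⟨Φ_s, Φ_s⟩ = ∏_{j<s} (1 - |α_j|²)`. -/
def genMom (L : LaurentPolynomial ℂ →ₗ[ℂ] ℂ) (α : ℕ → ℂ) (n : ℤ) (r s : ℕ) : ℂ :=
  L (Polynomial.toLaurent (szego α s) *
      laurentBarInv (LaurentPolynomial.T n * Polynomial.toLaurent (szego α r))) /
    ∏ j ∈ Finset.range s, ((1 - Complex.normSq (α j) : ℝ) : ℂ)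

/-- `IsLatticePath S p l q` : the list of steps `l`, starting at `p`, forms a lattice
path from `p` to `q` lying weakly above the x-axis, each step `st` taken from a
position `x` satisfying the (possibly position-dependent) step condition `S x st`. -/
def IsLatticePath (S : ℤ × ℤ → ℤ × ℤ → Prop) : ℤ × ℤ → List (ℤ × ℤ) → ℤ × ℤ → Prop
  | p, [], q => p = q ∧ 0 ≤ p.2
  | p, st :: rest, q => 0 ≤ p.2 ∧ S p st ∧ IsLatticePath S (p + st) rest q

/-- The weight of a path: the product of the weights of its steps, where the weight
of a step may depend on its starting position. -/
def pathWeight (w : ℤ × ℤ → ℤ × ℤ → ℂ) : ℤ × ℤ → List (ℤ × ℤ) → ℂ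
  | _, [] => 1
  | p, st :: rest => w p st * pathWeight w (p + st) rest

/-- Łukasiewicz steps: `(1, k)` with `k ≤ 1`. -/
def lukaStep (_p st : ℤ × ℤ) : Prop := st.1 = 1 ∧ st.2 ≤ 1

/-- Łukasiewicz step weights: an up-step has weight `1`, and a step
`(a,b) → (a+1,b-k)` (`0 ≤ k ≤ b`) has weight
`-α_b·conj(α_{b-k-1})·∏_{j=b-k}^{b-1} (1-|α_j|²)`. -/
def wtLstep (α : ℕ → ℂ) (p st : ℤ × ℤ) : ℂ :=
  if st.2 = 1 then 1
  else
    -(az α p.2) * (starRingEnd ℂ) (az α (p.2 + st.2 - 1)) *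
      ∏ j ∈ Finset.Ico (p.2 + st.2) p.2, ((1 - Complex.normSq (az α j) : ℝ) : ℂ)

/-- Gentle Motzkin steps: `(1,1)` (only at even `a+b`), `(1,0)`, `(1,-1)` (only at odd `a+b`). -/
def gentleStep (p st : ℤ × ℤ) : Prop :=
  (st = (1, 1) ∧ Even (p.1 + p.2)) ∨ st = (1, 0) ∨ (st = (1, -1) ∧ Odd (p.1 + p.2))

/-- Gentle Motzkin step weights. -/
def wtMstep (α : ℕ → ℂ) (p st : ℤ × ℤ) : ℂ :=
  if st = (1, 1) then 1
  else if st = (1, -1) then ((1 - Complex.normSq (az α (p.2 - 1)) : ℝ) : ℂ)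
  else if Even (p.1 + p.2) then az α p.2
  else -(starRingEnd ℂ) (az α (p.2 - 1))

/-- Schröder steps: `(1,1)`, `(1,0)`, `(0,-1)`. -/
def schStep (_p st : ℤ × ℤ) : Prop := st = (1, 1) ∨ st = (1, 0) ∨ st = (0, -1)

/-- Schröder step weights. -/
def wtSstep (α : ℕ → ℂ) (p st : ℤ × ℤ) : ℂ :=
  if st = (1, 1) then 1
  else if st = (1, 0) then -((starRingEnd ℂ) (az α (p.2 - 1)) / (starRingEnd ℂ) (az α p.2))
  else
    ((starRingEnd ℂ) (az α (p.2 - 2)) / (starRingEnd ℂ) (az α (p.2 - 1))) *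
      ((1 - Complex.normSq (az α (p.2 - 1)) : ℝ) : ℂ)

local notation "conj" => starRingEnd ℂ

def conjInvert : ℂ[T;T⁻¹] →+* ℂ[T;T⁻¹] :=
  (invert : ℂ[T;T⁻¹] ≃ₐ[ℂ] ℂ[T;T⁻¹]).toRingHom.comp (AddMonoidAlgebra.mapRingHom ℤ conj)

lemma mapRingHom_C_mul_T {R S : Type*} [Semiring R] [Semiring S] (f : R →+* S) (a : R) (n : ℤ) :
    AddMonoidAlgebra.mapRingHom ℤ f (LaurentPolynomial.C a * T n) =
      LaurentPolynomial.C (f a) * T n := by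
  rw [← single_eq_C_mul_T, AddMonoidAlgebra.mapRingHom_single, single_eq_C_mul_T]

@[simp]
lemma conjInvert_C_mul_T (a : ℂ) (n : ℤ) :
    conjInvert (LaurentPolynomial.C a * T n) = LaurentPolynomial.C (conj a) * T (-n) := by
  simp [conjInvert, mapRingHom_C_mul_T]

@[simp]
lemma conjInvert_C (a : ℂ) :
    conjInvert (LaurentPolynomial.C a) = LaurentPolynomial.C (conj a) := by
  simpa using conjInvert_C_mul_T a 0

@[simp]
lemma conjInvert_T (n : ℤ) : conjInvert (T n : ℂ[T;T⁻¹]) = T (-n) := by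
  simpa using conjInvert_C_mul_T 1 n

@[simp]
lemma conjInvert_conjInvert (f : ℂ[T;T⁻¹]) : conjInvert (conjInvert f) = f := by
  induction f using LaurentPolynomial.induction_on' with
  | add p q hp hq => simp [hp, hq]
  | C_mul_T n a => simp

lemma laurentBarInv_eq_conjInvert (f : ℂ[T;T⁻¹]) : laurentBarInv f = conjInvert f := by
  induction f using LaurentPolynomial.induction_on' with
  | add p q hp hq =>
    rw [map_add, ← hp, ← hq, laurentBarInv, laurentBarInv, laurentBarInv,
      AddMonoidAlgebra.coeff_add]
    exact Finsupp.sum_add_index' (by simp) (by simp [add_mul])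
  | C_mul_T n a =>
    by_cases ha : a = 0
    · simp [ha, laurentBarInv]
    · rw [← single_eq_C_mul_T, laurentBarInv, AddMonoidAlgebra.coeff_single,
        Finsupp.sum_single_index (by simp), single_eq_C_mul_T, conjInvert_C_mul_T]

lemma polyBarInv_eq_conjInvert (p : ℂ[X]) : polyBarInv p = conjInvert (toLaurent p) := by
  induction p using Polynomial.induction_on' with
  | add p q hp hq =>
    rw [polyBarInv, Polynomial.sum_add_index _ _ _ (by simp) (by simp [add_mul]), map_add, map_add,
      ← hp, ← hq, polyBarInv, polyBarInv]
  | monomial n a => simp [polyBarInv, Polynomial.toLaurent_C_mul_T]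

lemma toLaurent_map {R S : Type*} [Semiring R] [Semiring S] (f : R →+* S) (p : R[X]) :
    toLaurent (p.map f) = AddMonoidAlgebra.mapRingHom ℤ f (toLaurent p) := by
  induction p using Polynomial.induction_on' with
  | add p q hp hq => simp [hp, hq]
  | monomial n a => simp [Polynomial.toLaurent_C_mul_T, mapRingHom_C_mul_T]

lemma toLaurent_reflect_map_conj {p : ℂ[X]} {n : ℕ} (hp : p.natDegree = n) :
    toLaurent (reflect n (p.map conj)) = T n * conjInvert (toLaurent p) := by
  have h := toLaurent_reverse (p.map conj)
  rw [reverse, natDegree_map, hp, toLaurent_map] at h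
  rw [h, mul_comm]
  rfl

/-- `Φ_n^*`. -/
def szegoStar (α : ℕ → ℂ) (n : ℕ) : ℂ[X] := reflect n ((szego α n).map conj)

lemma szego_succ (α : ℕ → ℂ) (n : ℕ) :
    szego α (n + 1) = X * szego α n - Polynomial.C (conj (α n)) * szegoStar α n := rfl

lemma szego_monic_and_natDegree (α : ℕ → ℂ) (n : ℕ) :
    (szego α n).Monic ∧ (szego α n).natDegree = n := by
  induction n with
  | zero => simp [szego]
  | succ n ih =>
    have hX : (X * szego α n).natDegree = n + 1 := by
      rw [natDegree_X_mul ih.1.ne_zero, ih.2]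
    have hlt :
        (Polynomial.C (conj (α n)) * szegoStar α n).natDegree < (X * szego α n).natDegree :=
      hX ▸ Nat.lt_succ_of_le ((natDegree_C_mul_le _ _).trans
        (natDegree_reflect_le.trans (max_le le_rfl (by rw [natDegree_map, ih.2]))))
    rw [szego_succ]
    exact ⟨(monic_X.mul ih.1).sub_of_left (degree_lt_degree hlt),
      (natDegree_sub_eq_left_of_natDegree_lt hlt).trans hX⟩

lemma szego_monic (α : ℕ → ℂ) (n : ℕ) : (szego α n).Monic := (szego_monic_and_natDegree α n).1

lemma natDegree_szego (α : ℕ → ℂ) (n : ℕ) : (szego α n).natDegree = n :=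
  (szego_monic_and_natDegree α n).2

lemma coeff_szego_self (α : ℕ → ℂ) (n : ℕ) : (szego α n).coeff n = 1 := by
  simpa [natDegree_szego] using (szego_monic α n).coeff_natDegree

lemma natDegree_szegoStar_le (α : ℕ → ℂ) (n : ℕ) : (szegoStar α n).natDegree ≤ n :=
  natDegree_reflect_le.trans (max_le le_rfl (by rw [natDegree_map, natDegree_szego]))

lemma toLaurent_szegoStar (α : ℕ → ℂ) (n : ℕ) :
    toLaurent (szegoStar α n) = T n * conjInvert (toLaurent (szego α n)) :=
  toLaurent_reflect_map_conj (natDegree_szego α n)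

lemma T_mul_T_neg {R : Type*} [Semiring R] (n : ℤ) : (T n * T (-n) : R[T;T⁻¹]) = 1 := by
  rw [← T_add, add_neg_cancel, T_zero]

lemma conjInvert_toLaurent_szego (α : ℕ → ℂ) (n : ℕ) :
    conjInvert (toLaurent (szego α n)) = T (-n) * toLaurent (szegoStar α n) := by
  rw [toLaurent_szegoStar, ← mul_assoc, ← T_add, neg_add_cancel, T_zero, one_mul]

lemma toLaurent_szego_succ (α : ℕ → ℂ) (n : ℕ) :
    toLaurent (szego α (n + 1)) =
      T 1 * toLaurent (szego α n) -
        LaurentPolynomial.C (conj (α n)) * toLaurent (szegoStar α n) := by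
  simp [szego_succ]

lemma toLaurent_szegoStar_succ (α : ℕ → ℂ) (n : ℕ) :
    toLaurent (szegoStar α (n + 1)) =
      toLaurent (szegoStar α n) - LaurentPolynomial.C (α n) * (T 1 * toLaurent (szego α n)) := by
  have hstar := toLaurent_szegoStar α n
  have hinv : conjInvert (toLaurent (szegoStar α n)) = T (-n) * toLaurent (szego α n) := by
    rw [hstar, map_mul, conjInvert_T, conjInvert_conjInvert]
  rw [toLaurent_szegoStar, toLaurent_szego_succ, map_sub, map_mul, map_mul, hinv, conjInvert_T,
    conjInvert_C, Complex.conj_conj, hstar, Nat.cast_succ, T_add]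
  linear_combination (T (n : ℤ) * conjInvert (toLaurent (szego α n))) * T_mul_T_neg (R := ℂ) 1 -
    (LaurentPolynomial.C (α n) * T 1 * toLaurent (szego α n)) * T_mul_T_neg (R := ℂ) n

lemma ofReal_one_sub_normSq (a : ℂ) : ((1 - Complex.normSq a : ℝ) : ℂ) = 1 - a * conj a := by
  rw [Complex.ofReal_sub, Complex.ofReal_one, Complex.mul_conj]

lemma toLaurent_szego_succ' (α : ℕ → ℂ) (n : ℕ) :
    toLaurent (szego α (n + 1)) =
      LaurentPolynomial.C ((1 - Complex.normSq (α n) : ℝ) : ℂ) * (T 1 * toLaurent (szego α n)) -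
        LaurentPolynomial.C (conj (α n)) * toLaurent (szegoStar α (n + 1)) := by
  rw [toLaurent_szegoStar_succ, toLaurent_szego_succ, ofReal_one_sub_normSq, map_sub, map_one,
    map_mul]
  ring

def phiNormSq (α : ℕ → ℂ) (k : ℕ) : ℂ := ∏ j ∈ range k, ((1 - Complex.normSq (α j) : ℝ) : ℂ)

lemma phiNormSq_succ (α : ℕ → ℂ) (k : ℕ) :
    phiNormSq α (k + 1) = (1 - α k * conj (α k)) * phiNormSq α k := by
  rw [phiNormSq, prod_range_succ, ofReal_one_sub_normSq, mul_comm, phiNormSq]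

lemma phiNormSq_ne_zero {α : ℕ → ℂ} (hα : ∀ k, ‖α k‖ < 1) (k : ℕ) : phiNormSq α k ≠ 0 := by
  refine prod_ne_zero_iff.2 fun j _ => Complex.ofReal_ne_zero.2 (sub_ne_zero.2 (Ne.symm ?_))
  rw [← Complex.sq_norm]
  exact (pow_lt_one₀ (norm_nonneg _) (hα j) two_ne_zero).ne

structure IsOrthogonalityFunctional (α : ℕ → ℂ) (L : ℂ[T;T⁻¹] →ₗ[ℂ] ℂ) : Prop where
  map_one : L 1 = 1
  map_szego : ∀ k : ℕ, 1 ≤ k → L (toLaurent (szego α k)) = 0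
  map_polyBarInv_szego : ∀ k : ℕ, 1 ≤ k → L (polyBarInv (szego α k)) = 0

lemma map_C_mul {R : Type*} [CommSemiring R] (L : R[T;T⁻¹] →ₗ[R] R) (c : R) (f : R[T;T⁻¹]) :
    L (LaurentPolynomial.C c * f) = c * L f := by
  rw [← LaurentPolynomial.smul_eq_C_mul, map_smul, smul_eq_mul]

lemma map_T_mul_szego_succ (α : ℕ → ℂ) (L : ℂ[T;T⁻¹] →ₗ[ℂ] ℂ) (t : ℤ) (k : ℕ) :
    L (T t * toLaurent (szego α (k + 1))) =
      L (T (t + 1) * toLaurent (szego α k)) -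
        conj (α k) * L (T t * toLaurent (szegoStar α k)) := by
  rw [toLaurent_szego_succ, T_add, ← map_C_mul, ← map_sub]
  ring_nf

lemma map_T_mul_szegoStar_succ (α : ℕ → ℂ) (L : ℂ[T;T⁻¹] →ₗ[ℂ] ℂ) (t : ℤ) (k : ℕ) :
    L (T t * toLaurent (szegoStar α (k + 1))) =
      L (T t * toLaurent (szegoStar α k)) - α k * L (T (t + 1) * toLaurent (szego α k)) := by
  rw [toLaurent_szegoStar_succ, T_add, ← map_C_mul, ← map_sub]
  ring_nf

lemma map_T_mul_toLaurent_mul {R : Type*} [CommSemiring R] (L : R[T;T⁻¹] →ₗ[R] R) (t : ℤ)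
    (q : R[X]) (f : R[T;T⁻¹]) :
    L (T t * toLaurent q * f) = ∑ i ∈ q.support, q.coeff i * L (T (t + i) * f) := by
  conv_lhs => rw [q.as_sum_support]
  simp only [map_sum, mul_sum, sum_mul]
  refine sum_congr rfl fun i _ => ?_
  rw [toLaurent_C_mul_T, T_add, ← map_C_mul]
  ring_nf

section Functional

variable {α : ℕ → ℂ} {L : ℂ[T;T⁻¹] →ₗ[ℂ] ℂ}

lemma IsOrthogonalityFunctional.map_T_neg_mul_szegoStar (hL : IsOrthogonalityFunctional α L)
    {k : ℕ} (hk : 1 ≤ k) : L (T (-k) * toLaurent (szegoStar α k)) = 0 := by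
  rw [← conjInvert_toLaurent_szego, ← polyBarInv_eq_conjInvert]
  exact hL.map_polyBarInv_szego k hk

lemma IsOrthogonalityFunctional.map_T_neg_succ_mul_szegoStar
    (hL : IsOrthogonalityFunctional α L) (k : ℕ) :
    L (T (-(k + 1)) * toLaurent (szegoStar α k)) = α k * L (T (-k) * toLaurent (szego α k)) := by
  have h := map_T_mul_szegoStar_succ α L (-(k + 1)) k
  rw [← Nat.cast_succ, hL.map_T_neg_mul_szegoStar (Nat.le_add_left 1 k)] at h
  push_cast at h
  rw [show -((k : ℤ) + 1) + 1 = -k by ring] at h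
  linear_combination -h

lemma IsOrthogonalityFunctional.map_T_one_mul_szego (hL : IsOrthogonalityFunctional α L)
    (k : ℕ) :
    L (T 1 * toLaurent (szego α k)) = conj (α k) * L (T 0 * toLaurent (szegoStar α k)) := by
  have h := map_T_mul_szego_succ α L 0 k
  rw [T_zero, one_mul, hL.map_szego (k + 1) (Nat.le_add_left 1 k), zero_add, ← T_zero] at h
  linear_combination -h

lemma IsOrthogonalityFunctional.map_T_mul_szego_and_szegoStar
    (hL : IsOrthogonalityFunctional α L) (k : ℕ) (t : ℤ) (ht : -k ≤ t) (ht' : t ≤ 0) :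
    L (T t * toLaurent (szego α k)) = (if t = -k then phiNormSq α k else 0) ∧
      L (T t * toLaurent (szegoStar α k)) = (if t = 0 then phiNormSq α k else 0) := by
  induction k generalizing t with
  | zero =>
    obtain rfl : t = 0 := by omega
    simp [szego, szegoStar, phiNormSq, hL.map_one]
  | succ k ih =>
    have hcases : t = -(k + 1) ∨ t = 0 ∨ -(k + 1) < t ∧ t < 0 := by omega
    push_cast
    constructor
    · rcases hcases with rfl | rfl | ⟨h1, h2⟩
      · rw [map_T_mul_szego_succ, hL.map_T_neg_succ_mul_szegoStar,
          show -((k : ℤ) + 1) + 1 = -k by ring, (ih (-k) le_rfl (by omega)).1, if_pos rfl,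
          if_pos rfl, phiNormSq_succ]
        ring
      · rw [T_zero, one_mul, hL.map_szego (k + 1) (by omega), if_neg (by omega)]
      · rw [map_T_mul_szego_succ, (ih (t + 1) (by omega) (by omega)).1,
          (ih t (by omega) (by omega)).2, if_neg (by omega), if_neg (by omega), if_neg (by omega)]
        simp
    · rcases hcases with rfl | rfl | ⟨h1, h2⟩
      · rw [if_neg (by omega)]
        exact_mod_cast hL.map_T_neg_mul_szegoStar (k := k + 1) (by omega)
      · rw [map_T_mul_szegoStar_succ, zero_add, hL.map_T_one_mul_szego,
          (ih 0 (by omega) le_rfl).2, if_pos rfl, if_pos rfl, phiNormSq_succ]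
        ring
      · rw [map_T_mul_szegoStar_succ, (ih (t + 1) (by omega) (by omega)).1,
          (ih t (by omega) (by omega)).2, if_neg (by omega), if_neg (by omega), if_neg (by omega)]
        simp

lemma map_T_mul_toLaurent_mul_eq_zero {t : ℤ} {q : ℂ[X]} {f : ℂ[T;T⁻¹]}
    (h : ∀ i ≤ q.natDegree, L (T (t + i) * f) = 0) : L (T t * toLaurent q * f) = 0 := by
  rw [map_T_mul_toLaurent_mul]
  exact sum_eq_zero fun i hi => by rw [h i (le_natDegree_of_mem_supp i hi), mul_zero]

lemma IsOrthogonalityFunctional.map_T_mul_toLaurent_mul_szego_eq_zero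
    (hL : IsOrthogonalityFunctional α L) {k : ℕ} {t : ℤ} {q : ℂ[X]}
    (hq : t + q.natDegree ≤ 0) (ht : -k < t) :
    L (T t * toLaurent q * toLaurent (szego α k)) = 0 :=
  map_T_mul_toLaurent_mul_eq_zero fun i hi => by
    rw [(hL.map_T_mul_szego_and_szegoStar k (t + i) (by omega) (by omega)).1, if_neg (by omega)]

lemma IsOrthogonalityFunctional.map_T_mul_toLaurent_mul_szegoStar_eq_zero
    (hL : IsOrthogonalityFunctional α L) {k : ℕ} {t : ℤ} {q : ℂ[X]}
    (hq : t + q.natDegree < 0) (ht : -k ≤ t) :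
    L (T t * toLaurent q * toLaurent (szegoStar α k)) = 0 :=
  map_T_mul_toLaurent_mul_eq_zero fun i hi => by
    rw [(hL.map_T_mul_szego_and_szegoStar k (t + i) (by omega) (by omega)).2, if_neg (by omega)]

lemma IsOrthogonalityFunctional.map_T_mul_szego_mul_szegoStar_eq_zero
    (hL : IsOrthogonalityFunctional α L) {s b : ℕ} {t : ℤ} (hb : t + b ≤ 0) (hs : -s < t) :
    L (T t * (toLaurent (szego α s) * toLaurent (szegoStar α b))) = 0 := by
  rw [mul_comm (toLaurent _), ← mul_assoc]
  have := natDegree_szegoStar_le α b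
  exact hL.map_T_mul_toLaurent_mul_szego_eq_zero (by omega) hs

lemma IsOrthogonalityFunctional.map_T_mul_szego_mul_szegoStar
    (hL : IsOrthogonalityFunctional α L) {s b : ℕ} {t : ℤ} (h : 2 * t + s + b = 0) :
    L (T t * (toLaurent (szego α s) * toLaurent (szegoStar α b))) =
      if b = s then phiNormSq α s else 0 := by
  rcases lt_trichotomy b s with hbs | rfl | hbs
  · rw [if_neg hbs.ne, hL.map_T_mul_szego_mul_szegoStar_eq_zero (by omega) (by omega)]
  · obtain rfl : t = -b := by omega
    rw [if_pos rfl, ← mul_assoc, map_T_mul_toLaurent_mul, sum_eq_single b]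
    · rw [coeff_szego_self, one_mul, neg_add_cancel,
        (hL.map_T_mul_szego_and_szegoStar b 0 (by omega) le_rfl).2, if_pos rfl]
    · intro i hi hib
      have := le_natDegree_of_mem_supp i hi
      rw [natDegree_szego] at this
      rw [(hL.map_T_mul_szego_and_szegoStar b _ (by omega) (by omega)).2, if_neg (by omega),
        mul_zero]
    · rw [mem_support_iff, coeff_szego_self]
      exact absurd one_ne_zero
  · rw [if_neg hbs.ne', ← mul_assoc]
    exact hL.map_T_mul_toLaurent_mul_szegoStar_eq_zero (by rw [natDegree_szego]; omega)
      (by omega)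

lemma IsOrthogonalityFunctional.map_T_mul_szego_mul_szego
    (hL : IsOrthogonalityFunctional α L) {s b : ℕ} {t : ℤ} (h : 2 * t + s + b = 1) :
    L (T t * (toLaurent (szego α s) * toLaurent (szego α b))) = 0 := by
  wlog hbs : b < s generalizing s b
  · rw [mul_comm (toLaurent _)]
    exact this (by omega) (by omega)
  rw [mul_comm (toLaurent _), ← mul_assoc]
  exact hL.map_T_mul_toLaurent_mul_szego_eq_zero (by rw [natDegree_szego]; omega) (by omega)

end Functional

def latticePathSum (S : ℤ × ℤ → ℤ × ℤ → Prop) (w : ℤ × ℤ → ℤ × ℤ → ℂ) (p q : ℤ × ℤ) : ℂ :=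
  ∑ᶠ l ∈ {l | IsLatticePath S p l q}, pathWeight w p l

section LatticePath

variable {S : ℤ × ℤ → ℤ × ℤ → Prop} {w : ℤ × ℤ → ℤ × ℤ → ℂ}

lemma IsLatticePath.fst_eq (hS : ∀ p st, S p st → st.1 = 1) {p q : ℤ × ℤ} {l : List (ℤ × ℤ)}
    (h : IsLatticePath S p l q) : q.1 = p.1 + l.length := by
  induction l generalizing p with
  | nil => simp [h.1]
  | cons st l ih =>
    rw [ih h.2.2, Prod.fst_add, hS p st h.2.1, List.length_cons]
    push_cast
    ring

lemma IsLatticePath.snd_nonneg {p q : ℤ × ℤ} {l : List (ℤ × ℤ)} (h : IsLatticePath S p l q) :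
    0 ≤ p.2 := by
  cases l with
  | nil => exact h.2
  | cons => exact h.1

lemma setOf_isLatticePath_eq_biUnion {p q : ℤ × ℤ} (hpq : p ≠ q) :
    {l | IsLatticePath S p l q} =
      ⋃ st ∈ {st | 0 ≤ p.2 ∧ S p st}, List.cons st '' {l | IsLatticePath S (p + st) l q} := by
  ext l
  cases l with
  | nil => simpa [IsLatticePath] using fun h => absurd h hpq
  | cons st l =>
    simp only [Set.mem_ofPred_eq, Set.mem_iUnion, Set.mem_image, List.cons.injEq, exists_prop]
    constructor
    · rintro ⟨hp, hst, hl⟩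
      exact ⟨st, ⟨hp, hst⟩, l, hl, rfl, rfl⟩
    · rintro ⟨st, ⟨hp, hst⟩, l, hl, rfl, rfl⟩
      exact ⟨hp, hst, hl⟩

lemma finite_setOf_isLatticePath (hS : ∀ p st, S p st → st.1 = 1)
    (hfin : ∀ p, {st | S p st}.Finite) (p q : ℤ × ℤ) : {l | IsLatticePath S p l q}.Finite := by
  suffices ∀ n : ℕ, ∀ p : ℤ × ℤ, q.1 - p.1 ≤ n → {l | IsLatticePath S p l q}.Finite from
    this _ p (Int.self_le_toNat _)
  intro n
  induction n with
  | zero =>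
    refine fun p hp => (Set.finite_singleton []).subset fun l hl => ?_
    have := hl.fst_eq hS
    simp only [Set.mem_singleton_iff, ← List.length_eq_zero_iff]
    omega
  | succ n ih =>
    intro p hp
    by_cases hpq : p = q
    · subst hpq
      exact ih p (by omega)
    rw [setOf_isLatticePath_eq_biUnion hpq]
    exact ((hfin p).subset fun st hst => hst.2).biUnion fun st hst =>
      (ih _ (by rw [Prod.fst_add, hS p st hst.2]; omega)).image _

lemma latticePathSum_eq_finsum_step (hS : ∀ p st, S p st → st.1 = 1)
    (hfin : ∀ p, {st | S p st}.Finite) {p q : ℤ × ℤ} (hpq : p ≠ q) (hp : 0 ≤ p.2) :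
    latticePathSum S w p q = ∑ᶠ st ∈ {st | S p st}, w p st * latticePathSum S w (p + st) q := by
  rw [latticePathSum, setOf_isLatticePath_eq_biUnion hpq]
  simp only [hp, true_and]
  rw [finsum_mem_biUnion _ (hfin p) fun st _ => (finite_setOf_isLatticePath hS hfin _ q).image _]
  · refine finsum_mem_congr rfl fun st _ => ?_
    rw [finsum_mem_image (List.cons_injective.injOn), latticePathSum, mul_finsum_mem]
    rfl
  · intro st _ st' _ hne
    exact Set.disjoint_left.2 fun _ ⟨_, _, h⟩ ⟨_, _, h'⟩ =>
      hne (List.cons_eq_cons.1 (h.trans h'.symm)).1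

lemma latticePathSum_of_snd_neg {p : ℤ × ℤ} (hp : p.2 < 0) (q : ℤ × ℤ) :
    latticePathSum S w p q = 0 := by
  rw [latticePathSum, Set.eq_empty_of_forall_notMem (s := {l | IsLatticePath S p l q})
    fun l hl => hl.snd_nonneg.not_gt hp, finsum_mem_empty]

lemma latticePathSum_of_lt (hS : ∀ p st, S p st → st.1 = 1) {p q : ℤ × ℤ} (h : q.1 < p.1) :
    latticePathSum S w p q = 0 := by
  rw [latticePathSum, Set.eq_empty_of_forall_notMem (s := {l | IsLatticePath S p l q})
    fun l hl => by have := hl.fst_eq hS; omega, finsum_mem_empty]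

lemma latticePathSum_of_fst_eq (hS : ∀ p st, S p st → st.1 = 1) {p q : ℤ × ℤ} (h : p.1 = q.1) :
    latticePathSum S w p q = if p = q ∧ 0 ≤ p.2 then 1 else 0 := by
  have hnil : {l | IsLatticePath S p l q} = if p = q ∧ 0 ≤ p.2 then {[]} else ∅ := by
    ext l
    refine ⟨fun hl => ?_, fun hl => ?_⟩
    · obtain rfl : l = [] := List.length_eq_zero_iff.1 (by have := hl.fst_eq hS; omega)
      rw [if_pos (show p = q ∧ 0 ≤ p.2 from hl)]
      exact Set.mem_singleton _
    · split_ifs at hl with hpq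
      · rw [Set.mem_singleton_iff.1 hl]
        exact hpq
      · exact absurd hl (Set.notMem_empty l)
  rw [latticePathSum, hnil]
  split_ifs
  · rw [finsum_mem_singleton, pathWeight]
  · exact finsum_mem_empty

lemma eq_of_eq_finsum_step (hS : ∀ p st, S p st → st.1 = 1) {f g : ℤ × ℤ → ℂ} {c : ℤ}
    (hf : ∀ p : ℤ × ℤ, p.1 < c → 0 ≤ p.2 → f p = ∑ᶠ st ∈ {st | S p st}, w p st * f (p + st))
    (hg : ∀ p : ℤ × ℤ, p.1 < c → 0 ≤ p.2 → g p = ∑ᶠ st ∈ {st | S p st}, w p st * g (p + st))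
    (hc : ∀ p : ℤ × ℤ, p.1 = c → f p = g p) (hneg : ∀ p : ℤ × ℤ, p.2 < 0 → f p = g p)
    {p : ℤ × ℤ} (hp : p.1 ≤ c) : f p = g p := by
  obtain ⟨n, hn⟩ : ∃ n : ℕ, c - p.1 = n := ⟨(c - p.1).toNat, by omega⟩
  induction n generalizing p with
  | zero => exact hc p (by omega)
  | succ n ih =>
    rcases lt_or_ge p.2 0 with hp2 | hp2
    · exact hneg p hp2
    rw [hf p (by omega) hp2, hg p (by omega) hp2]
    refine finsum_mem_congr rfl fun st hst => ?_
    have hst1 := hS p st hst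
    rw [ih (by rw [Prod.fst_add]; omega) (by rw [Prod.fst_add]; omega)]

end LatticePath

lemma gentleStep_fst {p st : ℤ × ℤ} (h : gentleStep p st) : st.1 = 1 := by
  rcases h with ⟨rfl, _⟩ | rfl | ⟨rfl, _⟩ <;> rfl

lemma setOf_gentleStep (p : ℤ × ℤ) :
    {st | gentleStep p st} =
      if Even (p.1 + p.2) then {(1, 1), (1, 0)} else {(1, 0), (1, -1)} := by
  ext st
  split_ifs with hev <;> simp [gentleStep, hev, ← Int.not_even_iff_odd, or_comm]

lemma finite_setOf_gentleStep (p : ℤ × ℤ) : {st | gentleStep p st}.Finite := by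
  rw [setOf_gentleStep]
  split_ifs <;> exact Set.toFinite _

lemma finsum_gentleStep (F : ℤ × ℤ → ℂ) (p : ℤ × ℤ) :
    ∑ᶠ st ∈ {st | gentleStep p st}, F st =
      if Even (p.1 + p.2) then F (1, 1) + F (1, 0) else F (1, 0) + F (1, -1) := by
  rw [setOf_gentleStep]
  split_ifs <;> exact finsum_mem_pair (by simp)

lemma az_natCast (α : ℕ → ℂ) (b : ℕ) : az α b = α b := by simp [az]

lemma az_neg_one (α : ℕ → ℂ) : az α (-1) = -1 := by simp [az]

def latticeMoment (α : ℕ → ℂ) (L : ℂ[T;T⁻¹] →ₗ[ℂ] ℂ) (s : ℕ) (n : ℤ) (p : ℤ × ℤ) : ℂ :=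
  if p.2 < 0 then 0
  else if Even (p.1 + p.2) then
    L (T ((p.1 - p.2) / 2 - n) * (toLaurent (szego α s) * toLaurent (szegoStar α p.2.toNat)))
  else L (T ((p.1 + 1 - p.2) / 2 - n) * (toLaurent (szego α s) * toLaurent (szego α p.2.toNat)))

lemma exists_eq_two_mul_add_of_even {x : ℤ} {b : ℕ} (h : Even (x + b)) : ∃ t, x = 2 * t + b := by
  obtain ⟨k, hk⟩ := h
  exact ⟨k - b, by omega⟩

lemma exists_eq_two_mul_add_sub_one_of_not_even {x : ℤ} {b : ℕ} (h : ¬Even (x + b)) :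
    ∃ t, x = 2 * t + b - 1 := by
  obtain ⟨k, hk⟩ := Int.not_even_iff_odd.1 h
  exact ⟨k - b + 1, by omega⟩

section LatticeMoment

variable (α : ℕ → ℂ) (L : ℂ[T;T⁻¹] →ₗ[ℂ] ℂ) (s : ℕ) (n : ℤ)

lemma latticeMoment_even (t : ℤ) (b : ℕ) :
    latticeMoment α L s n (2 * t + b, b) =
      L (T (t - n) * (toLaurent (szego α s) * toLaurent (szegoStar α b))) := by
  rw [latticeMoment, if_neg (by omega), if_pos ⟨t + b, by ring⟩, Int.toNat_natCast]
  congr 3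
  omega

lemma latticeMoment_odd (t : ℤ) (b : ℕ) :
    latticeMoment α L s n (2 * t + b - 1, b) =
      L (T (t - n) * (toLaurent (szego α s) * toLaurent (szego α b))) := by
  have hodd : ¬Even (2 * t + b - 1 + b) := by
    rw [Int.not_even_iff_odd]
    exact ⟨t + b - 1, by ring⟩
  rw [latticeMoment, if_neg (by omega), if_neg hodd, Int.toNat_natCast]
  congr 3
  omega

lemma latticeMoment_of_even {p : ℤ × ℤ} (hp : 0 ≤ p.2) (hev : Even (p.1 + p.2)) :
    latticeMoment α L s n p =
      latticeMoment α L s n (p + (1, 1)) + α p.2.toNat * latticeMoment α L s n (p + (1, 0)) := by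
  obtain ⟨x, b⟩ := p
  lift b to ℕ using hp
  obtain ⟨t, rfl⟩ := exists_eq_two_mul_add_of_even hev
  have hup : ((2 * t + b, (b : ℤ)) + (1, 1) : ℤ × ℤ) =
      (2 * t + ((b + 1 : ℕ) : ℤ), ((b + 1 : ℕ) : ℤ)) := by
    ext <;> simp; ring
  have hflat : ((2 * t + b, (b : ℤ)) + (1, 0) : ℤ × ℤ) = (2 * (t + 1) + b - 1, (b : ℤ)) := by
    ext <;> simp; ring
  have hshift : T (t - n) * (toLaurent (szego α s) *
        (LaurentPolynomial.C (α b) * (T 1 * toLaurent (szego α b)))) =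
      LaurentPolynomial.C (α b) *
        (T (t + 1 - n) * (toLaurent (szego α s) * toLaurent (szego α b))) := by
    rw [add_sub_right_comm, T_add]
    ring
  rw [hup, hflat, latticeMoment_even, latticeMoment_even, latticeMoment_odd, Int.toNat_natCast,
    toLaurent_szegoStar_succ, mul_sub, mul_sub, map_sub, hshift, map_C_mul, sub_add_cancel]

lemma latticeMoment_of_odd {p : ℤ × ℤ} (hp : 0 ≤ p.2) (hodd : ¬Even (p.1 + p.2)) :
    latticeMoment α L s n p =
      -conj (az α (p.2 - 1)) * latticeMoment α L s n (p + (1, 0)) +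
        ((1 - Complex.normSq (az α (p.2 - 1)) : ℝ) : ℂ) * latticeMoment α L s n (p + (1, -1)) := by
  obtain ⟨x, b⟩ := p
  lift b to ℕ using hp
  obtain ⟨t, rfl⟩ := exists_eq_two_mul_add_sub_one_of_not_even hodd
  have hflat : ((2 * t + b - 1, (b : ℤ)) + (1, 0) : ℤ × ℤ) = (2 * t + b, (b : ℤ)) := by
    ext <;> simp
  rw [hflat, latticeMoment_odd, latticeMoment_even]
  cases b with
  | zero =>
    -- `α₋₁ = -1`: the flat step has weight `1` and the down step weight `0`.
    simp [az_neg_one, szego, szegoStar]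
  | succ b =>
    have hdown : ((2 * t + ((b + 1 : ℕ) : ℤ) - 1, ((b + 1 : ℕ) : ℤ)) + (1, -1) : ℤ × ℤ) =
        (2 * (t + 1) + b - 1, (b : ℤ)) := by
      ext <;> simp; ring
    have hshift : T (t - n) * (toLaurent (szego α s) *
          (LaurentPolynomial.C ((1 - Complex.normSq (α b) : ℝ) : ℂ) *
            (T 1 * toLaurent (szego α b)))) =
      LaurentPolynomial.C ((1 - Complex.normSq (α b) : ℝ) : ℂ) *
        (T (t + 1 - n) * (toLaurent (szego α s) * toLaurent (szego α b))) := by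
      rw [add_sub_right_comm, T_add]
      ring
    rw [hdown, latticeMoment_odd, toLaurent_szego_succ', mul_sub, mul_sub,
      map_sub, hshift, map_C_mul, show ((b + 1 : ℕ) : ℤ) - 1 = b by push_cast; ring, az_natCast,
      mul_left_comm (toLaurent (szego α s)), mul_left_comm (T (t - n)), map_C_mul]
    ring

lemma latticeMoment_eq_finsum_step {p : ℤ × ℤ} (hp : 0 ≤ p.2) :
    latticeMoment α L s n p =
      ∑ᶠ st ∈ {st | gentleStep p st}, wtMstep α p st * latticeMoment α L s n (p + st) := by
  rw [finsum_gentleStep]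
  split_ifs with hev
  · rw [latticeMoment_of_even α L s n hp hev]
    simp [wtMstep, hev, az, hp]
  · rw [latticeMoment_of_odd α L s n hp hev]
    simp [wtMstep, hev]

variable {α L} in
lemma IsOrthogonalityFunctional.latticeMoment_of_fst_eq (hL : IsOrthogonalityFunctional α L)
    {p : ℤ × ℤ} (hp : p.1 = 2 * n - s) :
    latticeMoment α L s n p = if p.2 = s then phiNormSq α s else 0 := by
  obtain ⟨x, b⟩ := p
  rcases lt_or_ge b 0 with hb | hb
  · rw [latticeMoment, if_pos hb, if_neg (by simp only; omega)]
  lift b to ℕ using hb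
  simp only [Nat.cast_inj] at hp ⊢
  by_cases hev : Even (x + b)
  · obtain ⟨t, rfl⟩ := exists_eq_two_mul_add_of_even hev
    exact (latticeMoment_even ..).trans (hL.map_T_mul_szego_mul_szegoStar (by omega))
  · obtain ⟨t, rfl⟩ := exists_eq_two_mul_add_sub_one_of_not_even hev
    rw [latticeMoment_odd, hL.map_T_mul_szego_mul_szego (by omega), if_neg (by omega)]

end LatticeMoment

lemma IsOrthogonalityFunctional.phiNormSq_mul_latticePathSum {α : ℕ → ℂ}
    {L : ℂ[T;T⁻¹] →ₗ[ℂ] ℂ} (hL : IsOrthogonalityFunctional α L) (s : ℕ) (n : ℤ) {p : ℤ × ℤ}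
    (hp : p.1 ≤ 2 * n - s) :
    phiNormSq α s * latticePathSum gentleStep (wtMstep α) p (2 * n - s, s) =
      latticeMoment α L s n p := by
  refine eq_of_eq_finsum_step
    (f := fun p => phiNormSq α s * latticePathSum gentleStep (wtMstep α) p _)
    (fun _ _ => gentleStep_fst) (fun p hpc hp2 => ?_)
    (fun p _ hp2 => latticeMoment_eq_finsum_step α L s n hp2) (fun p hpc => ?_)
    (fun p hp2 => ?_) hp
  · rw [latticePathSum_eq_finsum_step (fun _ _ => gentleStep_fst) finite_setOf_gentleStep
      (fun h => by rw [h] at hpc; exact hpc.false) hp2, mul_finsum_mem]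
    exact finsum_mem_congr rfl fun _ _ => mul_left_comm _ _ _
  · rw [hL.latticeMoment_of_fst_eq s n hpc,
      latticePathSum_of_fst_eq (fun _ _ => gentleStep_fst) hpc]
    by_cases hps : p.2 = s
    · rw [if_pos ⟨Prod.ext hpc hps, hps ▸ Nat.cast_nonneg s⟩, if_pos hps, mul_one]
    · rw [if_neg fun h : p = _ ∧ _ => hps (by rw [h.1]), if_neg hps, mul_zero]
  · rw [latticePathSum_of_snd_neg hp2, latticeMoment, if_pos hp2, mul_zero]

lemma genMom_eq_div (L : ℂ[T;T⁻¹] →ₗ[ℂ] ℂ) (α : ℕ → ℂ) (n : ℤ) (r s : ℕ) :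
    genMom L α n r s =
      L (T (-n - r) * (toLaurent (szego α s) * toLaurent (szegoStar α r))) / phiNormSq α s := by
  rw [genMom, laurentBarInv_eq_conjInvert, map_mul conjInvert, conjInvert_T,
    conjInvert_toLaurent_szego, sub_eq_add_neg, T_add, phiNormSq]
  ring_nf

/-- the generalized moment `μ_{n,r,s}` equals the weight sum over
gentle Motzkin paths from `(-r,r)` to `(2n-s,s)`. -/
theorem genMom_eq_gentleMotzkin (α : ℕ → ℂ) (hα : ∀ k, ‖α k‖ < 1)
    (L : LaurentPolynomial ℂ →ₗ[ℂ] ℂ) (hL1 : L 1 = 1)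
    (hLphi : ∀ k : ℕ, 1 ≤ k → L (Polynomial.toLaurent (szego α k)) = 0)
    (hLbar : ∀ k : ℕ, 1 ≤ k → L (polyBarInv (szego α k)) = 0)
    (n r s : ℕ) :
    genMom L α n r s =
      ∑ᶠ p ∈ {l : List (ℤ × ℤ) |
          IsLatticePath gentleStep (-(r : ℤ), (r : ℤ)) l (2 * (n : ℤ) - s, (s : ℤ))},
        pathWeight (wtMstep α) (-(r : ℤ), (r : ℤ)) p := by
  have hL : IsOrthogonalityFunctional α L := ⟨hL1, hLphi, hLbar⟩
  change _ = latticePathSum gentleStep (wtMstep α) (-(r : ℤ), (r : ℤ)) (2 * (n : ℤ) - s, (s : ℤ))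
  rw [genMom_eq_div, div_eq_iff (phiNormSq_ne_zero hα s)]
  rcases le_or_gt (-(r : ℤ)) (2 * n - s) with h | h
  · rw [mul_comm _ (phiNormSq α s),
      hL.phiNormSq_mul_latticePathSum s n (p := (-(r : ℤ), (r : ℤ))) h,
      show ((-(r : ℤ), (r : ℤ)) : ℤ × ℤ) = (2 * -(r : ℤ) + r, (r : ℤ)) by ext <;> simp; ring,
      latticeMoment_even, show -(r : ℤ) - n = -n - r by ring]
  · rw [latticePathSum_of_lt (fun _ _ => gentleStep_fst) h, zero_mul]
    exact hL.map_T_mul_szego_mul_szegoStar_eq_zero (by omega) (by omega)
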